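/- Let L ≅ F/R where F is a free Lie ring and R an ideal. Then for any abelian Lie ring A, the transgression map Hom(R/[F,R], A) → H²(L,A) associated with the natural central extension 0 → R/[F,R] → F/[F,R] → L → 0 is surjective. -/

import Mathlib

/-- The five cocycle conditions of Horn–Zandi for a pair `(f, g)` of maps `L × L → A`,
where `L` is a Lie ring and `A` a trivial `L`-module (an abelian group). -/
def IsLieRingCocycle {L A : Type*} [LieRing L] [AddCommGroup A]
    (f g : L → L → A) : Prop :=
  (∀ x y z : L, f (x + y) z = f x z + f y z + g ⁅x, z⁆ ⁅y, z⁆) ∧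
  (∀ x y z : L, f x (y + z) = f x y + f x z + g ⁅x, y⁆ ⁅x, z⁆) ∧
  (∀ x : L, f x x = 0) ∧
  (∀ x y z : L, f x ⁅y, z⁆ + f z ⁅x, y⁆ + f y ⁅z, x⁆ =
    - g ⁅x, ⁅y, z⁆⁆ ⁅z, ⁅x, y⁆⁆ - g (-⁅y, ⁅z, x⁆⁆) ⁅y, ⁅z, x⁆⁆) ∧
  (∀ x y z : L, g (x + y) z + g x y = g x (y + z) + g y z) ∧
  (∀ x y : L, g x y = g y x)

/-- Coboundaries: pairs arising from a map `t : L → A` with `t 0 = 0` via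
`f (x, y) = -t ⁅x, y⁆` and `g (x, y) = t x + t y - t (x + y)`. -/
def IsLieRingCoboundary {L A : Type*} [LieRing L] [AddCommGroup A]
    (f g : L → L → A) : Prop :=
  ∃ t : L → A, t 0 = 0 ∧ (∀ x y : L, f x y = - t ⁅x, y⁆) ∧
    (∀ x y : L, g x y = t x + t y - t (x + y))

/-!
A cocycle `(f, g)` is exactly the data of a Lie ring structure on `E = L × A` (addition twisted
by `g`, bracket by `f`) in which `A` is central and the first projection is a Lie ring map.
Since `F` is free, the presentation `F → L` lifts to `E`; it sends `R` into the central
subgroup `A`, hence kills `[F, R]`, and so gives a map `Ψ : F/[F,R] → E` over `L`. The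
`A`-component of `Ψ` on `R/[F,R]` is the required `χ`, and for any normalized section `λ`
the `A`-components of `Ψ ∘ λ` provide the coboundary.
-/

namespace IsLieRingCocycle

variable {L A : Type*} [LieRing L] [AddCommGroup A] {f g : L → L → A}
  (hfg : IsLieRingCocycle f g)
include hfg

theorem f_add_left (x y z : L) : f (x + y) z = f x z + f y z + g ⁅x, z⁆ ⁅y, z⁆ := hfg.1 x y z

theorem f_add_right (x y z : L) : f x (y + z) = f x y + f x z + g ⁅x, y⁆ ⁅x, z⁆ :=
  hfg.2.1 x y z

theorem f_self (x : L) : f x x = 0 := hfg.2.2.1 x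

theorem f_jacobi (x y z : L) : f x ⁅y, z⁆ + f z ⁅x, y⁆ + f y ⁅z, x⁆ =
    - g ⁅x, ⁅y, z⁆⁆ ⁅z, ⁅x, y⁆⁆ - g (-⁅y, ⁅z, x⁆⁆) ⁅y, ⁅z, x⁆⁆ :=
  hfg.2.2.2.1 x y z

theorem g_add_left (x y z : L) : g (x + y) z + g x y = g x (y + z) + g y z := hfg.2.2.2.2.1 x y z

theorem g_comm (x y : L) : g x y = g y x := hfg.2.2.2.2.2 x y

theorem g_zero_zero : g 0 0 = 0 := by
  simpa [hfg.f_self] using (hfg.f_add_left 0 0 0).symm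

theorem g_zero_right (x : L) : g x 0 = 0 := by
  simpa [hfg.g_zero_zero] using hfg.g_add_left x 0 0

theorem g_zero_left (x : L) : g 0 x = 0 := by
  rw [hfg.g_comm, hfg.g_zero_right]

theorem f_zero_right (x : L) : f x 0 = 0 := by
  simpa [hfg.g_zero_zero] using hfg.f_add_right x 0 0

theorem f_add_f_swap (x y : L) : f x y + f y x + g ⁅x, y⁆ ⁅y, x⁆ = 0 := by
  have h := hfg.f_self (x + y)
  rw [hfg.f_add_left x y (x + y), hfg.f_add_right x x y, hfg.f_add_right y x y] at h
  simp only [lie_self, lie_add, zero_add, add_zero, hfg.f_self, hfg.g_zero_left,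
    hfg.g_zero_right] at h
  linear_combination (norm := abel) h

theorem f_neg_right (x y : L) : f x (-y) = -f x y - g ⁅x, y⁆ ⁅y, x⁆ := by
  have h := hfg.f_add_right x y (-y)
  simp only [add_neg_cancel, hfg.f_zero_right, lie_neg] at h
  rw [← lie_skew y x]
  linear_combination (norm := abel) -h

theorem g_sub_left (x y : L) : g (y - x) x = g (-x) x - g y (-x) := by
  have h := hfg.g_add_left y (-x) x
  simp only [neg_add_cancel, hfg.g_zero_right, ← sub_eq_add_neg] at h
  linear_combination (norm := abel) h

/-- The Leibniz identity in the `A`-component of the extension defined by `(f, g)`. -/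
theorem f_leibniz (x y z : L) :
    f x ⁅y, z⁆ = f ⁅x, y⁆ z + f y ⁅x, z⁆ + g ⁅⁅x, y⁆, z⁆ ⁅y, ⁅x, z⁆⁆ := by
  have e := hfg.f_jacobi x y z
  have hzx : (⁅z, x⁆ : L) = -⁅x, z⁆ := by rw [← lie_skew]
  have hq : (⁅⁅x, y⁆, z⁆ : L) = -⁅z, ⁅x, y⁆⁆ := by rw [← lie_skew]
  have hd : (⁅⁅x, z⁆, y⁆ : L) = -⁅y, ⁅x, z⁆⁆ := by rw [← lie_skew]
  have hp : (⁅x, ⁅y, z⁆⁆ : L) = ⁅y, ⁅x, z⁆⁆ - ⁅z, ⁅x, y⁆⁆ := by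
    rw [leibniz_lie x y z, hq]; abel
  rw [hzx, lie_neg, neg_neg, hp] at e
  have ha := hfg.f_add_f_swap z ⁅x, y⁆
  have hb := hfg.f_neg_right y ⁅x, z⁆
  have hc := hfg.g_sub_left ⁅z, ⁅x, y⁆⁆ ⁅y, ⁅x, z⁆⁆
  rw [hq] at ha ⊢
  rw [hd] at hb
  have h1 := hfg.g_comm ⁅z, ⁅x, y⁆⁆ (-⁅z, ⁅x, y⁆⁆)
  have h2 := hfg.g_comm ⁅y, ⁅x, z⁆⁆ (-⁅z, ⁅x, y⁆⁆)
  linear_combination (norm := abel) e - ha - hb - hc + h1 + h2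

end IsLieRingCocycle

/-- The Lie ring `L ×_{(f,g)} A`: the operations are defined for all `f g`, the Lie ring
structure once `IsLieRingCocycle f g` is available as a `Fact`. -/
@[ext]
structure CocycleExt {L A : Type*} (f g : L → L → A) where
  fst : L
  snd : A

namespace CocycleExt

variable {L A : Type*} [LieRing L] {f g : L → L → A}

instance : Bracket (CocycleExt f g) (CocycleExt f g) :=
  ⟨fun a b => ⟨⁅a.fst, b.fst⁆, f a.fst b.fst⟩⟩

@[simp] theorem fst_lie (a b : CocycleExt f g) : ⁅a, b⁆.fst = ⁅a.fst, b.fst⁆ := rfl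

@[simp] theorem snd_lie (a b : CocycleExt f g) : ⁅a, b⁆.snd = f a.fst b.fst := rfl

variable [AddCommGroup A]

instance : Zero (CocycleExt f g) := ⟨⟨0, 0⟩⟩

instance : Add (CocycleExt f g) := ⟨fun a b => ⟨a.fst + b.fst, a.snd + b.snd + g a.fst b.fst⟩⟩

instance : Neg (CocycleExt f g) := ⟨fun a => ⟨-a.fst, -a.snd - g a.fst (-a.fst)⟩⟩

@[simp] theorem fst_zero : (0 : CocycleExt f g).fst = 0 := rfl

@[simp] theorem snd_zero : (0 : CocycleExt f g).snd = 0 := rfl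

@[simp] theorem fst_add (a b : CocycleExt f g) : (a + b).fst = a.fst + b.fst := rfl

@[simp] theorem snd_add (a b : CocycleExt f g) :
    (a + b).snd = a.snd + b.snd + g a.fst b.fst := rfl

@[simp] theorem fst_neg (a : CocycleExt f g) : (-a).fst = -a.fst := rfl

@[simp] theorem snd_neg (a : CocycleExt f g) : (-a).snd = -a.snd - g a.fst (-a.fst) := rfl

variable [hfg : Fact (IsLieRingCocycle f g)]

instance : AddCommGroup (CocycleExt f g) :=
  { AddGroup.ofLeftAxioms
      (fun a b c => CocycleExt.ext (add_assoc _ _ _) (by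
        simp only [snd_add, fst_add]
        linear_combination (norm := abel) hfg.out.g_add_left a.fst b.fst c.fst))
      (fun a => CocycleExt.ext (zero_add _) (by simp [hfg.out.g_zero_left]))
      (fun a => CocycleExt.ext (neg_add_cancel _) (by
        simp only [snd_add, snd_neg, fst_neg, hfg.out.g_comm (-a.fst) a.fst, snd_zero]
        abel)) with
    add_comm := fun a b => CocycleExt.ext (add_comm _ _) (by
      simp only [snd_add, hfg.out.g_comm a.fst b.fst, add_comm a.snd]) }

instance : LieRing (CocycleExt f g) where
  add_lie _ _ _ := CocycleExt.ext (add_lie _ _ _) (hfg.out.f_add_left _ _ _)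
  lie_add _ _ _ := CocycleExt.ext (lie_add _ _ _) (hfg.out.f_add_right _ _ _)
  lie_self _ := CocycleExt.ext (lie_self _) (hfg.out.f_self _)
  leibniz_lie _ _ _ := CocycleExt.ext (leibniz_lie _ _ _) (hfg.out.f_leibniz _ _ _)

theorem snd_sub_of_fst_eq {a b : CocycleExt f g} (h : a.fst = b.fst) :
    (a - b).snd = a.snd - b.snd := by
  rw [sub_eq_add_neg, snd_add, snd_neg, fst_neg, h]
  abel

theorem snd_add_of_fst_eq_zero {a : CocycleExt f g} (h : a.fst = 0) (b : CocycleExt f g) :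
    (a + b).snd = a.snd + b.snd := by
  rw [snd_add, h, hfg.out.g_zero_left, add_zero]

theorem lie_eq_zero_of_fst_eq_zero (a : CocycleExt f g) {b : CocycleExt f g} (h : b.fst = 0) :
    ⁅a, b⁆ = 0 :=
  CocycleExt.ext (by simp [h]) (by simp [h, hfg.out.f_zero_right])

variable (f g) in
def proj : CocycleExt f g →ₗ⁅ℤ⁆ L :=
  { (AddMonoidHom.mk' fst fst_add).toIntLinearMap with map_lie' := rfl }

theorem proj_surjective : Function.Surjective (proj f g) := fun x => ⟨⟨x, 0⟩, rfl⟩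

theorem isLieRingCoboundary_sub (s : L → CocycleExt f g) (hs : ∀ x, (s x).fst = x)
    (hs0 : s 0 = 0) :
    IsLieRingCoboundary (fun x y => f x y - (⁅s x, s y⁆ - s ⁅x, y⁆).snd)
      (fun x y => g x y - (s x + s y - s (x + y)).snd) := by
  refine ⟨fun x => -(s x).snd, by simp [hs0], fun x y => ?_, fun x y => ?_⟩
  · beta_reduce
    rw [snd_sub_of_fst_eq (by simp [hs]), snd_lie, hs, hs]
    abel
  · beta_reduce
    rw [snd_sub_of_fst_eq (by simp [hs]), snd_add, hs, hs]
    abel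

end CocycleExt

theorem Function.Surjective.exists_rightInverse_map_zero {M N : Type*} [Zero M] [Zero N]
    {φ : M → N} (hφ : Function.Surjective φ) (h0 : φ 0 = 0) :
    ∃ lam : N → M, (∀ x, φ (lam x) = x) ∧ lam 0 = 0 := by
  classical
  refine ⟨Function.update (Function.surjInv hφ) 0 0, fun x => ?_, by simp⟩
  by_cases hx : x = 0
  · simp [hx, h0]
  · simp [hx, Function.surjInv_eq hφ]

namespace LieIdeal

variable {K L L' : Type*} [CommRing K] [LieRing L] [LieAlgebra K L] [LieRing L'] [LieAlgebra K L']

def liftQ (I : LieIdeal K L) (ψ : L →ₗ⁅K⁆ L') (h : I ≤ ψ.ker) : L ⧸ I →ₗ⁅K⁆ L' :=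
  { I.toSubmodule.liftQ ψ.toLinearMap fun _ hx => h hx with
    map_lie' := by
      rintro ⟨x⟩ ⟨y⟩
      exact ψ.map_lie x y }

theorem top_lie_le_ker_of_lie_eq_zero (I : LieIdeal K L) (ψ : L →ₗ⁅K⁆ L')
    (h : ∀ x, ∀ r ∈ I, ⁅ψ x, ψ r⁆ = 0) : ⁅(⊤ : LieIdeal K L), I⁆ ≤ ψ.ker := by
  rw [LieSubmodule.lie_le_iff]
  intro x _ r hr
  rw [LieHom.mem_ker, LieHom.map_lie, h x r hr]

end LieIdeal

theorem FreeLieAlgebra.exists_lieHom_comp_eq {K X E L : Type*} [CommRing K] [LieRing E]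
    [LieAlgebra K E] [LieRing L] [LieAlgebra K L] (π : E →ₗ⁅K⁆ L) (hπ : Function.Surjective π)
    (p : FreeLieAlgebra K X →ₗ⁅K⁆ L) : ∃ ψ : FreeLieAlgebra K X →ₗ⁅K⁆ E, π.comp ψ = p :=
  ⟨lift K fun x => Function.surjInv hπ (p (of K x)),
    hom_ext fun x => by simp [Function.surjInv_eq hπ]⟩

/-- `LieIdeal ℤ (FreeLieAlgebra ℤ X)` elaborates with `LieRing.instLieAlgebra` rather than
`FreeLieAlgebra.instLieAlgebra ℤ X`; the two agree only up to unfolding, hence the statement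
over `ℤ` and the type ascription on `ψ`. -/
theorem FreeLieAlgebra.exists_lieHom_quotient_top_lie {X E : Type*} [LieRing E]
    (R : LieIdeal ℤ (FreeLieAlgebra ℤ X)) (π : E →ₗ⁅ℤ⁆ FreeLieAlgebra ℤ X ⧸ R)
    (hπ : Function.Surjective π) (hcentral : ∀ e e' : E, π e' = 0 → ⁅e, e'⁆ = 0) :
    ∃ Ψ : FreeLieAlgebra ℤ X ⧸ (⁅(⊤ : LieIdeal ℤ (FreeLieAlgebra ℤ X)), R⁆ :
        LieIdeal ℤ (FreeLieAlgebra ℤ X)) →ₗ⁅ℤ⁆ E,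
      ∀ x, π (Ψ (LieSubmodule.Quotient.mk x)) = LieSubmodule.Quotient.mk x := by
  obtain ⟨ψ, hψ⟩ : ∃ ψ : FreeLieAlgebra ℤ X →ₗ⁅ℤ⁆ E,
      π.comp ψ = { R.toSubmodule.mkQ with map_lie' := rfl } :=
    FreeLieAlgebra.exists_lieHom_comp_eq π hπ _
  have hψR : ∀ r ∈ R, π (ψ r) = 0 := fun r hr => by
    rw [← LieHom.comp_apply, hψ]
    exact (LieSubmodule.Quotient.mk_eq_zero' (N := R)).2 hr
  refine ⟨LieIdeal.liftQ _ ψ (LieIdeal.top_lie_le_ker_of_lie_eq_zero R ψ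
    fun x r hr => hcentral _ _ (hψR r hr)), fun x => ?_⟩
  exact LieHom.congr_fun hψ x

/-- Let `L ≅ F/R` where `F` is a free Lie ring (the free Lie
algebra over `ℤ` on a set `X`) and `R` an ideal of `F`. Then for any abelian
Lie ring `A`, the transgression map `Hom(R/[F,R], A) → H²(L, A)` associated
with the natural central extension `0 → R/[F,R] → F/[F,R] → L → 0` is
surjective: every cohomology class, represented by a cocycle `(f, g)` of `L`
in `A`, is (up to a coboundary) the transgression `(χ ∘ FF, χ ∘ GG)` of some
homomorphism `χ` on the kernel `R/[F,R]` of the canonical map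
`φ : F/[F,R] → F/R`, computed via a normalized section `λ` of `φ`. -/
theorem transgression_surjective_of_free_presentation {X A : Type*}
    [AddCommGroup A] (R : LieIdeal ℤ (FreeLieAlgebra ℤ X))
    (φ : (FreeLieAlgebra ℤ X ⧸
        (⁅(⊤ : LieIdeal ℤ (FreeLieAlgebra ℤ X)), R⁆ :
          LieIdeal ℤ (FreeLieAlgebra ℤ X))) →ₗ⁅ℤ⁆ (FreeLieAlgebra ℤ X ⧸ R))
    (hφ : ∀ x : FreeLieAlgebra ℤ X,
      φ (LieSubmodule.Quotient.mk x) = LieSubmodule.Quotient.mk x)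
    (f g : (FreeLieAlgebra ℤ X ⧸ R) → (FreeLieAlgebra ℤ X ⧸ R) → A)
    (hfg : IsLieRingCocycle f g) :
    ∃ (χ : φ.ker →+ A)
      (lam : (FreeLieAlgebra ℤ X ⧸ R) → (FreeLieAlgebra ℤ X ⧸
        (⁅(⊤ : LieIdeal ℤ (FreeLieAlgebra ℤ X)), R⁆ :
          LieIdeal ℤ (FreeLieAlgebra ℤ X))))
      (FF GG : (FreeLieAlgebra ℤ X ⧸ R) → (FreeLieAlgebra ℤ X ⧸ R) → φ.ker),
      (∀ x : FreeLieAlgebra ℤ X ⧸ R, φ (lam x) = x) ∧ lam 0 = 0 ∧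
      (∀ x y : FreeLieAlgebra ℤ X ⧸ R,
        (FF x y : _) = ⁅lam x, lam y⁆ - lam ⁅x, y⁆) ∧
      (∀ x y : FreeLieAlgebra ℤ X ⧸ R,
        (GG x y : _) = lam x + lam y - lam (x + y)) ∧
      IsLieRingCoboundary (fun x y => f x y - χ (FF x y))
        (fun x y => g x y - χ (GG x y)) := by
  have : Fact (IsLieRingCocycle f g) := ⟨hfg⟩
  obtain ⟨Ψ, hΨ⟩ := FreeLieAlgebra.exists_lieHom_quotient_top_lie R
    (CocycleExt.proj f g) CocycleExt.proj_surjective fun e _ he' => CocycleExt.lie_eq_zero_of_fst_eq_zero e he'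
  have hΨφ : ∀ q, (Ψ q).fst = φ q := by
    rintro ⟨x⟩
    exact (hΨ x).trans (hφ x).symm
  have hφ_surj : Function.Surjective φ := by
    rintro ⟨x⟩
    exact ⟨_, hφ x⟩
  obtain ⟨lam, hlam, hlam0⟩ := hφ_surj.exists_rightInverse_map_zero φ.map_zero
  let χ : φ.ker →+ A := AddMonoidHom.mk' (fun q => (Ψ q).snd) fun q q' => by
    rw [LieSubmodule.coe_add, map_add,
      CocycleExt.snd_add_of_fst_eq_zero ((hΨφ q).trans (LieHom.mem_ker.1 q.2))]
  refine ⟨χ, lam, fun x y => ⟨⁅lam x, lam y⁆ - lam ⁅x, y⁆, by simp [hlam]⟩,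
    fun x y => ⟨lam x + lam y - lam (x + y), by simp [hlam]⟩, hlam, hlam0,
    fun _ _ => rfl, fun _ _ => rfl, ?_⟩
  have h := CocycleExt.isLieRingCoboundary_sub (fun x => Ψ (lam x))
    (fun x => (hΨφ _).trans (hlam x)) (by rw [hlam0, map_zero])
  simp only [← LieHom.map_lie, ← map_sub, ← map_add] at h
  exact h
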